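/- arXiv:quant-ph/0501044 — 2 statements merged into one kernel-verified Lean document; each statement's English description precedes it below -/
import Mathlib

section
/- If k ≥ log₂ N + 4 (and in particular k ≥ 3), then p := (1/(2^k N^{k+1})) Σ_{x ∈ (ℤ/N)^k} (Σ_{r ∈ ℤ/N} √(η_r^x))^2 satisfies p ≥ 1/8. -/
open Finset

/-- The subset sum `b · x = ∑ j, b j * x j` over `ℤ/N`. -/
def dotP {N k : ℕ} (b : Fin k → Bool) (x : Fin k → ZMod N) : ZMod N :=
  ∑ j, if b j then x j else 0

/-- `η_r^x`: the number of bit strings `b ∈ {0,1}^k` with `b · x ≡ r (mod N)`. -/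
def etaN {N k : ℕ} (r : ZMod N) (x : Fin k → ZMod N) : ℕ :=
  (Finset.univ.filter fun b : Fin k → Bool => dotP b x = r).card

/-!
Write `η_r = η_r^x`. Since `∑_r η_r = 2^k`, Hölder's inequality
`(∑ η_r)^3 ≤ (∑ √η_r)^2 ∑ η_r^2` bounds each summand of `p` below by `8^k / ∑_r η_r^2`.
The second moment `∑_x ∑_r η_r^2` counts triples `(b, b', x)` with `b · x = b' · x`; for `b ≠ b'`
this is a linear equation in `x` with a unit coefficient, hence has `N^(k-1)` solutions, so the
second moment is at most `2^k N^(k-1) (2^k + N)`. The arithmetic–harmonic mean inequality over `x`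
then gives `p ≥ 2^k / (2^k + N)`, which is at least `1/8` once `2^k ≥ 16 N`.
-/

open Matrix

theorem AddMonoidHom.card_fiber_mul_card_of_surjective {G H : Type*} [AddGroup G] [AddGroup H]
    [Fintype G] [Fintype H] [DecidableEq H] (φ : G →+ H) (hφ : Function.Surjective φ) (c : H) :
    #{g | φ g = c} * Fintype.card H = Fintype.card G := by
  calc #{g | φ g = c} * Fintype.card H = ∑ c' : H, #{g | φ g = c'} := by
        rw [sum_congr rfl fun c' _ => AddMonoidHom.card_fiber_eq_of_mem_range φ (hφ c') (hφ c),
          sum_const, card_univ, smul_eq_mul, mul_comm]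
    _ = Fintype.card G := (card_eq_sum_card_fiberwise fun g _ => mem_univ (φ g)).symm

theorem card_filter_dotProduct_eq_mul_card {ι R : Type*} [Fintype ι] [DecidableEq ι] [CommRing R]
    [Fintype R] [DecidableEq R] {v : ι → R} {j : ι} (hv : IsUnit (v j)) (c : R) :
    #{x : ι → R | v ⬝ᵥ x = c} * Fintype.card R = Fintype.card R ^ Fintype.card ι := by
  let φ : (ι → R) →+ R := AddMonoidHom.mk' (v ⬝ᵥ ·) (dotProduct_add v)
  have hφ : Function.Surjective φ := fun c =>
    ⟨Pi.single j (hv.unit⁻¹ * c), by simp [φ, dotProduct_single, ← mul_assoc]⟩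
  rw [← Fintype.card_fun, ← φ.card_fiber_mul_card_of_surjective hφ c]
  rfl

theorem sum_card_fiber_sq {α β : Type*} [Fintype α] [Fintype β] [DecidableEq β] (f : α → β) :
    ∑ r, #{a | f a = r} ^ 2 = ∑ a, ∑ a', if f a = f a' then 1 else 0 := by
  simp only [card_filter, sq, sum_mul_sum]
  rw [sum_comm]
  refine sum_congr rfl fun a _ => ?_
  rw [sum_comm]
  refine sum_congr rfl fun a' _ => ?_
  simp [eq_comm]

theorem Finset.sum_sq_pow_three_le_sq_sum_mul_sum_pow_four {ι R : Type*} [CommSemiring R]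
    [LinearOrder R] [IsStrictOrderedRing R] [ExistsAddOfLE R] (s : Finset ι) {f : ι → R}
    (hf : ∀ i ∈ s, 0 ≤ f i) :
    (∑ i ∈ s, f i ^ 2) ^ 3 ≤ (∑ i ∈ s, f i) ^ 2 * ∑ i ∈ s, f i ^ 4 := by
  have h₁ : (∑ i ∈ s, f i ^ 2) ^ 2 ≤ (∑ i ∈ s, f i) * ∑ i ∈ s, f i ^ 3 :=
    sum_sq_le_sum_mul_sum_of_sq_le_mul s hf (fun i hi => pow_nonneg (hf i hi) 3)
      fun i _ => by ring_nf; rfl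
  have h₂ : (∑ i ∈ s, f i ^ 3) ^ 2 ≤ (∑ i ∈ s, f i ^ 2) * ∑ i ∈ s, f i ^ 4 :=
    sum_sq_le_sum_mul_sum_of_sq_le_mul s (fun i hi => pow_nonneg (hf i hi) 2)
      (fun i hi => pow_nonneg (hf i hi) 4) fun i _ => by ring_nf; rfl
  set A := ∑ i ∈ s, f i ^ 2
  have hA₀ : 0 ≤ A := sum_nonneg fun i _ => sq_nonneg (f i)
  rcases hA₀.eq_or_lt with hA | hA
  · rw [← hA, zero_pow three_ne_zero]
    exact mul_nonneg (sq_nonneg _) (sum_nonneg fun i _ => pow_nonneg (hf i ‹_›) 4)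
  refine le_of_mul_le_mul_right ?_ hA
  calc A ^ 3 * A = (A ^ 2) ^ 2 := by ring
    _ ≤ ((∑ i ∈ s, f i) * ∑ i ∈ s, f i ^ 3) ^ 2 := pow_le_pow_left₀ (sq_nonneg A) h₁ 2
    _ = (∑ i ∈ s, f i) ^ 2 * (∑ i ∈ s, f i ^ 3) ^ 2 := mul_pow _ _ 2
    _ ≤ (∑ i ∈ s, f i) ^ 2 * (A * ∑ i ∈ s, f i ^ 4) := mul_le_mul_of_nonneg_left h₂ (sq_nonneg _)
    _ = (∑ i ∈ s, f i) ^ 2 * (∑ i ∈ s, f i ^ 4) * A := by ring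

section
variable {N k : ℕ}

theorem dotP_eq_dotProduct (b : Fin k → Bool) (x : Fin k → ZMod N) :
    dotP b x = (fun j => if b j then 1 else 0) ⬝ᵥ x := by
  simp only [dotP, dotProduct, boole_mul]

variable [NeZero N]

theorem card_dotP_eq_dotP_mul {b b' : Fin k → Bool} (hb : b ≠ b') :
    #{x : Fin k → ZMod N | dotP b x = dotP b' x} * N = N ^ k := by
  obtain ⟨j, hj⟩ := Function.ne_iff.mp hb
  have key := card_filter_dotProduct_eq_mul_card (j := j)
    (v := (fun j => if b j then (1 : ZMod N) else 0) - fun j => if b' j then 1 else 0) ?_ 0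
  · simpa [dotP_eq_dotProduct, sub_dotProduct, sub_eq_zero] using key
  · cases hbj : b j <;> cases hb'j : b' j <;> simp_all

theorem sum_etaN (x : Fin k → ZMod N) : ∑ r, etaN r x = 2 ^ k := by
  simp only [etaN, ← card_eq_sum_card_fiberwise fun b _ => mem_univ (dotP b x)]
  simp

theorem sum_sum_etaN_sq :
    ∑ x : Fin k → ZMod N, ∑ r, etaN r x ^ 2 =
      ∑ b, ∑ b', #{x : Fin k → ZMod N | dotP b x = dotP b' x} := by
  simp only [etaN]
  rw [sum_congr rfl fun x _ => sum_card_fiber_sq fun b => dotP b x, sum_comm]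
  refine sum_congr rfl fun b _ => ?_
  rw [sum_comm]
  simp only [card_filter]

theorem sum_sum_etaN_sq_mul_le :
    (∑ x : Fin k → ZMod N, ∑ r, etaN r x ^ 2) * N ≤ 2 ^ k * N ^ k * (2 ^ k + N) := by
  have hcoll (b b' : Fin k → Bool) :
      #{x : Fin k → ZMod N | dotP b x = dotP b' x} * N ≤
        (if b = b' then N ^ k * N else 0) + N ^ k := by
    by_cases hb : b = b'
    · simp [hb]
    · simp [hb, card_dotP_eq_dotP_mul hb]
  calc (∑ x : Fin k → ZMod N, ∑ r, etaN r x ^ 2) * N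
      = ∑ b, ∑ b', #{x : Fin k → ZMod N | dotP b x = dotP b' x} * N := by
        simp only [sum_sum_etaN_sq, sum_mul]
    _ ≤ ∑ b : Fin k → Bool, ∑ b', ((if b = b' then N ^ k * N else 0) + N ^ k) :=
        sum_le_sum fun b _ => sum_le_sum fun b' _ => hcoll b b'
    _ = 2 ^ k * N ^ k * (2 ^ k + N) := by
        simp [sum_add_distrib]
        ring

theorem eight_pow_le_sq_sum_sqrt_etaN_mul (x : Fin k → ZMod N) :
    (8 : ℝ) ^ k ≤ (∑ r, √(etaN r x : ℝ)) ^ 2 * ∑ r, (etaN r x : ℝ) ^ 2 := by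
  have h := sum_sq_pow_three_le_sq_sum_mul_sum_pow_four univ
    (f := fun r => √(etaN r x : ℝ)) fun r _ => Real.sqrt_nonneg _
  have hsq (r : ZMod N) : √(etaN r x : ℝ) ^ 2 = etaN r x := Real.sq_sqrt (Nat.cast_nonneg _)
  have hpow4 (r : ZMod N) : √(etaN r x : ℝ) ^ 4 = (etaN r x : ℝ) ^ 2 := by
    rw [show 4 = 2 * 2 from rfl, pow_mul, hsq]
  have hsum : ∑ r, (etaN r x : ℝ) = 2 ^ k := by exact_mod_cast sum_etaN x
  simp only [hsq, hpow4, hsum] at h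
  calc (8 : ℝ) ^ k = (2 ^ k) ^ 3 := by rw [← pow_mul, mul_comm, pow_mul]; norm_num
    _ ≤ _ := h

theorem le_sum_sq_sum_sqrt_etaN :
    (4 : ℝ) ^ k * N ^ (k + 1) / (2 ^ k + N) ≤
      ∑ x : Fin k → ZMod N, (∑ r, √(etaN r x : ℝ)) ^ 2 := by
  set Q : (Fin k → ZMod N) → ℝ := fun x => ∑ r, (etaN r x : ℝ) ^ 2
  have hQ (x) : 0 < Q x := by
    refine pos_of_mul_pos_right ?_ (sq_nonneg (∑ r, √(etaN r x : ℝ)))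
    exact (pow_pos (by norm_num) k).trans_le (eight_pow_le_sq_sum_sqrt_etaN_mul x)
  have hsumQ : (∑ x, Q x) * N ≤ 2 ^ k * N ^ k * (2 ^ k + N) := by
    simp only [Q]
    exact_mod_cast sum_sum_etaN_sq_mul_le (N := N) (k := k)
  have hN : (0 : ℝ) < N := by exact_mod_cast NeZero.pos N
  have hS : 0 < ∑ x, Q x := sum_pos (fun x _ => hQ x) univ_nonempty
  calc (4 : ℝ) ^ k * N ^ (k + 1) / (2 ^ k + N)
      ≤ 8 ^ k * ((∑ _x : Fin k → ZMod N, (1 : ℝ)) ^ 2 / ∑ x, Q x) := by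
        simp only [sum_const, card_univ, Fintype.card_fun, ZMod.card, Fintype.card_fin,
          nsmul_eq_mul, mul_one, Nat.cast_pow, mul_div_assoc']
        rw [div_le_div_iff₀ (by positivity) hS]
        calc (4 : ℝ) ^ k * N ^ (k + 1) * ∑ x, Q x = 4 ^ k * N ^ k * ((∑ x, Q x) * N) := by ring
          _ ≤ 4 ^ k * N ^ k * (2 ^ k * N ^ k * (2 ^ k + N)) := by gcongr
          _ = 8 ^ k * (N ^ k) ^ 2 * (2 ^ k + N) := by
            rw [show (8 : ℝ) = 4 * 2 by norm_num, mul_pow]; ring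
    _ ≤ 8 ^ k * ∑ x, 1 ^ 2 / Q x := by
        gcongr
        exact sq_sum_div_le_sum_sq_div _ _ fun x _ => hQ x
    _ ≤ _ := by
        rw [mul_sum]
        refine sum_le_sum fun x _ => ?_
        rw [one_pow, mul_one_div, div_le_iff₀ (hQ x)]
        exact eight_pow_le_sq_sum_sqrt_etaN_mul x

end

theorem success_prob_lower_bound_general {N k : ℕ} [NeZero N] (hk : 16 * N ≤ 2 ^ k) :
    (1 / 8 : ℝ) ≤ (1 / ((2 : ℝ) ^ k * (N : ℝ) ^ (k + 1))) *
      ∑ x : Fin k → ZMod N, (∑ r : ZMod N, Real.sqrt (etaN r x)) ^ 2 := by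
  have hN : (0 : ℝ) < N := by exact_mod_cast NeZero.pos N
  have hk' : 16 * (N : ℝ) ≤ 2 ^ k := by exact_mod_cast hk
  calc (1 / 8 : ℝ) ≤ 2 ^ k / (2 ^ k + N) := by
        rw [div_le_div_iff₀ (by norm_num) (by positivity)]
        linarith
    _ = 1 / ((2 : ℝ) ^ k * N ^ (k + 1)) * (4 ^ k * N ^ (k + 1) / (2 ^ k + N)) := by
        rw [show (4 : ℝ) ^ k = 2 ^ k * 2 ^ k by rw [← mul_pow]; norm_num]
        field_simp
    _ ≤ _ := by
        gcongr
        exact le_sum_sq_sum_sqrt_etaN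

/-- If `k ≥ log₂ N + 4` (i.e. `2^k ≥ 16 N`, and in particular `k ≥ 3`), then the success
probability `p` of the pretty good measurement is at least `1/8`. -/
theorem success_prob_lower_bound {N k : ℕ} [NeZero N] (hk : 16 * N ≤ 2 ^ k) (hk3 : 3 ≤ k) :
    (1 / 8 : ℝ) ≤ (1 / ((2 : ℝ) ^ k * (N : ℝ) ^ (k + 1))) *
      ∑ x : Fin k → ZMod N, (∑ r : ZMod N, Real.sqrt (etaN r x)) ^ 2 :=
  success_prob_lower_bound_general hk
end

section
/- The success probability of the optimal measurement for determining the least significant bit of the shift, p̃ := ½[1 + (1/(2N)^k)(Σ_{x ∈ (ℤ/N)^k} Σ_{r ∈ ℤ/N} √(η_r^x η_{−r}^x) + 2η_0^x + 2η_{N/2}^x)], satisfies p̃ ≤ ½(1 + 2^k/N + 6/N + 3/2^k). -/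
open Finset

/-!
Since `η_r^x η_{-r}^x` is a natural number, its square root is at most itself, and the three
resulting sums over `x` count solutions of linear equations over `ℤ/N`. For `b ≠ 0` the
functional `x ↦ b · x` is onto, so each of its fibres has `N^(k-1)` points; the same holds for
`x ↦ b · x + b' · x` when `b ≠ b'`, while for `b = b' ≠ 0` the equation `2 (b · x) = 0`
has at most `2 N^(k-1)` solutions because `2 s = 0` has at most two roots in the cyclic
group `ℤ/N`. Only `b = 0` sees all `N^k` points, and not at all for `r = N/2 ≠ 0`. Altogether
`N ∑_x (…) ≤ 3 N^(k+1) + (4^k + 5 · 2^k) N^k`, and dividing by `N (2N)^k` gives the bound.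
-/

namespace AddMonoidHom

variable {G H : Type*} [AddGroup G] [Fintype G] [AddGroup H] [Fintype H] [DecidableEq H]

lemma card_mul_card_fiber_of_surjective (f : G →+ H) (hf : Function.Surjective f) (t : H) :
    Fintype.card H * #{g | f g = t} = Fintype.card G := by
  calc Fintype.card H * #{g | f g = t} = ∑ y : H, #{g | f g = y} := by
        rw [Finset.sum_congr rfl fun y _ => card_fiber_eq_of_mem_range f (hf y) (hf t)]
        simp
    _ = Fintype.card G := (card_eq_sum_card_fiberwise fun _ _ => mem_univ _).symm

end AddMonoidHom

section dotP

variable {N k : ℕ}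

lemma dotP_add (b : Fin k → Bool) (x y : Fin k → ZMod N) :
    dotP b (x + y) = dotP b x + dotP b y := by
  simp only [dotP, ← sum_add_distrib]
  refine sum_congr rfl fun j _ => ?_
  split_ifs <;> simp

lemma dotP_single (b : Fin k → Bool) (j : Fin k) (t : ZMod N) :
    dotP b (Pi.single j t) = if b j then t else 0 := by
  rw [dotP, Fintype.sum_eq_single j fun i hi => by simp [hi]]
  simp

lemma dotP_false (x : Fin k → ZMod N) : dotP (fun _ => false) x = 0 := by
  simp [dotP]

variable [NeZero N]

lemma mul_card_dotP_fiber {b : Fin k → Bool} {j : Fin k} (hb : b j = true) (t : ZMod N) :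
    N * #{x | dotP b x = t} = N ^ k := by
  let f := AddMonoidHom.mk' (dotP b) (dotP_add (N := N) b)
  have hsurj : Function.Surjective f := fun t => ⟨Pi.single j t, by simp [f, dotP_single, hb]⟩
  simpa [f] using f.card_mul_card_fiber_of_surjective hsurj t

lemma mul_card_dotP_add_fiber {b b' : Fin k → Bool} {j : Fin k} (hb : b j ≠ b' j)
    (t : ZMod N) : N * #{x | dotP b x + dotP b' x = t} = N ^ k := by
  let f := AddMonoidHom.mk' (dotP b) (dotP_add (N := N) b) +
    AddMonoidHom.mk' (dotP b') (dotP_add b')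
  have hsurj : Function.Surjective f := fun t =>
    ⟨Pi.single j t, by cases h : b j <;> cases h' : b' j <;> simp_all [f, dotP_single]⟩
  simpa [f] using f.card_mul_card_fiber_of_surjective hsurj t

lemma mul_card_dotP_add_self_eq_zero_le {b : Fin k → Bool} {j : Fin k} (hb : b j = true) :
    N * #{x | dotP b x + dotP b x = (0 : ZMod N)} ≤ 2 * N ^ k := by
  calc N * #{x | dotP b x + dotP b x = 0}
      = ∑ s ∈ {s : ZMod N | s + s = 0}, N * #{x | dotP b x = s} := by
        rw [card_eq_sum_card_fiberwise (f := dotP b) (t := {s : ZMod N | s + s = 0})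
          (fun x hx => by simpa using hx), mul_sum]
        refine sum_congr rfl fun s hs => ?_
        congr 2
        ext x
        simp only [mem_filter, mem_univ, true_and, and_iff_right_iff_imp]
        rintro rfl
        simpa using hs
    _ = #{s : ZMod N | s + s = 0} * N ^ k := by
        rw [sum_congr rfl fun s _ => mul_card_dotP_fiber hb s, sum_const, smul_eq_mul]
    _ ≤ 2 * N ^ k := by
        gcongr
        simpa only [two_nsmul] using IsAddCyclic.card_nsmul_eq_zero_le (α := ZMod N) two_pos

lemma mul_card_dotP_fiber_le (b : Fin k → Bool) (t : ZMod N) :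
    N * #{x | dotP b x = t} ≤
      N ^ k + if b = (fun _ => false) then (if t = 0 then N ^ (k + 1) else 0) else 0 := by
  by_cases hb : b = fun _ => false
  · subst hb
    by_cases ht : t = 0 <;> simp [dotP_false, ht, eq_comm (a := (0 : ZMod N)), pow_succ']
  · obtain ⟨j, hj⟩ : ∃ j, b j = true := by simpa [funext_iff] using hb
    simp [mul_card_dotP_fiber hj, hb]

lemma mul_card_dotP_add_dotP_eq_zero_le (b b' : Fin k → Bool) :
    N * #{x | dotP b x + dotP b' x = (0 : ZMod N)} ≤
      N ^ k +
        if b = b' then N ^ k + (if b = (fun _ => false) then N ^ (k + 1) else 0) else 0 := by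
  by_cases hbb' : b = b'
  · subst hbb'
    by_cases hb : b = fun _ => false
    · have hcard : #{x | dotP b x + dotP b x = (0 : ZMod N)} ≤ N ^ k := by
        simpa using card_filter_le (univ : Finset (Fin k → ZMod N)) _
      rw [if_pos rfl, if_pos hb, pow_succ']
      have := Nat.mul_le_mul_left N hcard
      omega
    · obtain ⟨j, hj⟩ : ∃ j, b j = true := by simpa [funext_iff] using hb
      have := mul_card_dotP_add_self_eq_zero_le (N := N) hj
      rw [if_pos rfl, if_neg hb]
      omega
  · obtain ⟨j, hj⟩ : ∃ j, b j ≠ b' j := Function.ne_iff.mp hbb'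
    simp [mul_card_dotP_add_fiber hj, hbb']

end dotP

section etaN

variable {N k : ℕ} [NeZero N]

lemma sum_etaN_eq_sum_card (t : ZMod N) :
    ∑ x : Fin k → ZMod N, etaN t x = ∑ b : Fin k → Bool, #{x | dotP b x = t} := by
  simp only [etaN, card_filter]
  exact sum_comm

lemma sum_etaN_mul_etaN_neg_eq_card (x : Fin k → ZMod N) :
    ∑ r, etaN r x * etaN (-r) x =
      #{p : (Fin k → Bool) × (Fin k → Bool) | dotP p.1 x + dotP p.2 x = 0} := by
  rw [card_eq_sum_card_fiberwise (f := fun p => dotP p.1 x) (t := univ) fun _ _ => mem_univ _]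
  refine sum_congr rfl fun r _ => ?_
  rw [etaN, etaN, ← card_product]
  congr 1
  ext ⟨b, b'⟩
  simp only [mem_filter, mem_product, mem_univ, true_and]
  constructor
  · rintro ⟨rfl, h⟩
    exact ⟨by rw [h, add_neg_cancel], rfl⟩
  · rintro ⟨h, rfl⟩
    exact ⟨rfl, (neg_eq_of_add_eq_zero_right h).symm⟩

lemma mul_sum_etaN_le (t : ZMod N) :
    N * ∑ x : Fin k → ZMod N, etaN t x ≤
      2 ^ k * N ^ k + if t = 0 then N ^ (k + 1) else 0 := by
  rw [sum_etaN_eq_sum_card, mul_sum]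
  calc _ ≤ ∑ b : Fin k → Bool,
        (N ^ k + if b = (fun _ => false) then (if t = 0 then N ^ (k + 1) else 0) else 0) :=
        sum_le_sum fun b _ => mul_card_dotP_fiber_le b t
    _ = _ := by simp [sum_add_distrib]

lemma mul_sum_sum_etaN_mul_etaN_neg_le :
    N * ∑ x : Fin k → ZMod N, ∑ r, etaN r x * etaN (-r) x ≤
      (4 ^ k + 2 ^ k) * N ^ k + N ^ (k + 1) := by
  simp only [sum_etaN_mul_etaN_neg_eq_card, card_filter]
  rw [sum_comm, mul_sum]
  simp only [← card_filter]
  calc _ ≤ ∑ p : (Fin k → Bool) × (Fin k → Bool), (N ^ k + if p.1 = p.2 then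
          N ^ k + (if p.1 = (fun _ => false) then N ^ (k + 1) else 0) else 0) :=
        sum_le_sum fun p _ => mul_card_dotP_add_dotP_eq_zero_le p.1 p.2
    _ = _ := by
        simp only [Fintype.sum_prod_type, sum_add_distrib, sum_const, card_univ,
          Fintype.card_prod, Fintype.card_pi, Fintype.card_bool, prod_const, Fintype.card_fin,
          smul_eq_mul, sum_ite_eq, sum_ite_eq', mem_univ, ↓reduceIte]
        rw [← mul_pow]
        ring

lemma mul_sum_etaN_terms_le (hN : 2 ≤ N) :
    N * ∑ x : Fin k → ZMod N, (∑ r, etaN r x * etaN (-r) x + 2 * etaN 0 x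
      + 2 * etaN ((N / 2 : ℕ) : ZMod N) x) ≤ 3 * N ^ (k + 1) + (4 ^ k + 5 * 2 ^ k) * N ^ k := by
  have hhalf_ne : ((N / 2 : ℕ) : ZMod N) ≠ 0 := by
    rw [Ne, ZMod.natCast_eq_zero_iff]
    exact Nat.not_dvd_of_pos_of_lt (by omega) (by omega)
  have hpairs := mul_sum_sum_etaN_mul_etaN_neg_le (N := N) (k := k)
  have hzero := mul_sum_etaN_le (N := N) (k := k) 0
  have hhalf := mul_sum_etaN_le (N := N) (k := k) ((N / 2 : ℕ) : ZMod N)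
  rw [if_pos rfl] at hzero
  rw [if_neg hhalf_ne] at hhalf
  simp only [sum_add_distrib, ← mul_sum, mul_add, mul_left_comm N 2]
  linarith

end etaN

lemma Real.sqrt_natCast_le_self (m : ℕ) : √(m : ℝ) ≤ m :=
  Real.sqrt_le_self_iff.mpr <| by
    rcases m.eq_zero_or_pos with h | h
    · simp [h]
    · exact Or.inr (Nat.one_le_cast.mpr h)

theorem lsb_success_prob_upper_bound_general {N k : ℕ} [NeZero N] (hN4 : 4 ≤ N) :
    (1 / 2 : ℝ) * (1 + (1 / (2 * (N : ℝ)) ^ k) *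
        ∑ x : Fin k → ZMod N,
          ((∑ r : ZMod N, Real.sqrt ((etaN r x : ℝ) * (etaN (-r) x : ℝ)))
            + 2 * (etaN (0 : ZMod N) x : ℝ) + 2 * (etaN ((N / 2 : ℕ) : ZMod N) x : ℝ)))
      ≤ (1 / 2 : ℝ) * (1 + (2 : ℝ) ^ k / N + 6 / N + 3 / (2 : ℝ) ^ k) := by
  have hN : (0 : ℝ) < N := by exact_mod_cast (by omega : 0 < N)
  have heq : (3 * (N : ℝ) ^ (k + 1) + (4 ^ k + 5 * 2 ^ k) * N ^ k) / N
      = (2 ^ k / N + 5 / N + 3 / 2 ^ k) * (2 * N) ^ k := by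
    rw [show (4 : ℝ) ^ k = 2 ^ k * 2 ^ k by rw [← mul_pow]; norm_num]
    field_simp
    ring
  have hfive_le_six : (5 : ℝ) / N ≤ 6 / N := by gcongr; norm_num
  calc _ ≤ (1 / 2 : ℝ) * (1 + (2 ^ k / N + 5 / N + 3 / 2 ^ k)) := by
        gcongr
        rw [one_div_mul_eq_div, div_le_iff₀ (by positivity), ← heq, le_div_iff₀ hN, mul_comm]
        calc _ ≤ (N : ℝ) * ((∑ x : Fin k → ZMod N, (∑ r, etaN r x * etaN (-r) x
              + 2 * etaN 0 x + 2 * etaN ((N / 2 : ℕ) : ZMod N) x) : ℕ) : ℝ) := by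
              push_cast
              gcongr with x _ r
              exact_mod_cast Real.sqrt_natCast_le_self (etaN r x * etaN (-r) x)
          _ ≤ _ := by exact_mod_cast mul_sum_etaN_terms_le (by omega)
    _ ≤ _ := by linarith

/-- Upper bound on the success probability `p̃` of the optimal measurement for determining the
least significant bit of the shift. -/
theorem lsb_success_prob_upper_bound {N k : ℕ} [NeZero N] (hN2 : 2 ∣ N) (hN4 : 4 ≤ N)
    (hk : 2 ≤ k) :
    (1 / 2 : ℝ) * (1 + (1 / (2 * (N : ℝ)) ^ k) *
        ∑ x : Fin k → ZMod N,
          ((∑ r : ZMod N, Real.sqrt ((etaN r x : ℝ) * (etaN (-r) x : ℝ)))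
            + 2 * (etaN (0 : ZMod N) x : ℝ) + 2 * (etaN ((N / 2 : ℕ) : ZMod N) x : ℝ)))
      ≤ (1 / 2 : ℝ) * (1 + (2 : ℝ) ^ k / N + 6 / N + 3 / (2 : ℝ) ^ k) :=
  lsb_success_prob_upper_bound_general hN4
end
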